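/- Let m ≥ 1 and let c ∈ ℂ satisfy c^m = −1. Let A = ℂ⟨u,v⟩/(u² − c·v²). Then u² is central in A, the elements u² and (uv)^m − (vu)^m commute, and they are algebraically independent over ℂ: the ℂ-algebra homomorphism from the polynomial ring ℂ[X,Y] to A sending X to u² and Y to (uv)^m − (vu)^m is injective. -/

import Mathlib

/-!
`u²` commutes with `u` and with `v` (as `u² v = c v³ = v u²`), so it is central.

For the independence, let `A` act on `2 × 2` matrices over `ℂ[x, y]` by
`u ↦ [[0, x], [y, 0]]` and `v ↦ [[0, c⁻¹ y], [x, 0]]`. Then `u² ↦ xy · 1`, and since `c⁻ᵐ = -1`,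
`(uv)ᵐ - (vu)ᵐ ↦ diag(f, -f)` with `f = x²ᵐ + y²ᵐ`. Hence a polynomial killed by `φ` vanishes
at `(xy, f)`. But `x²ᵐ` and `y²ᵐ` are the roots of `T² - f T + (xy)²ᵐ`, so `ℂ[x, y]` is integral
over `ℂ[xy, f]`, and comparing transcendence degrees, `xy` and `f` are algebraically independent.
-/

noncomputable section

open FreeAlgebra

/-- The relation `u² = c • v²` on `ℂ⟨u,v⟩`, i.e. the quotient by the two-sided
ideal generated by `u² - c v²`. -/
inductive Stmt19.Rel (c : ℂ) : FreeAlgebra ℂ (Fin 2) → FreeAlgebra ℂ (Fin 2) → Prop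
  | main : Stmt19.Rel c (ι ℂ 0 * ι ℂ 0) (c • (ι ℂ 1 * ι ℂ 1))

/-- `A = ℂ⟨u,v⟩/(u² - c v²)`. -/
abbrev Stmt19.A (c : ℂ) := RingQuot (Stmt19.Rel c)

def Stmt19.u (c : ℂ) : Stmt19.A c := RingQuot.mkAlgHom ℂ (Stmt19.Rel c) (ι ℂ 0)
def Stmt19.v (c : ℂ) : Stmt19.A c := RingQuot.mkAlgHom ℂ (Stmt19.Rel c) (ι ℂ 1)

open MvPolynomial Matrix

theorem IsIntegral.of_add_mem_range_of_mul_mem_range {R A : Type*} [CommRing R] [CommRing A]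
    [Algebra R A] {a b : A} (hadd : a + b ∈ (algebraMap R A).range)
    (hmul : a * b ∈ (algebraMap R A).range) : IsIntegral R a := by
  obtain ⟨s, hs⟩ := hadd
  obtain ⟨p, hp⟩ := hmul
  refine ⟨Polynomial.X ^ 2 - Polynomial.C s * Polynomial.X + Polynomial.C p, by monicity!, ?_⟩
  simp only [Polynomial.eval₂_add, Polynomial.eval₂_sub, Polynomial.eval₂_mul,
    Polynomial.eval₂_X_pow, Polynomial.eval₂_C, Polynomial.eval₂_X, hs, hp]
  ring

theorem Algebra.isIntegral_of_adjoin_eq_top {R S A : Type*} [CommRing R] [CommRing S]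
    [CommRing A] [Algebra R S] [Algebra R A] [Algebra S A] [IsScalarTower R S A] {s : Set A}
    (hs : Algebra.adjoin R s = ⊤) (h : ∀ a ∈ s, IsIntegral S a) : Algebra.IsIntegral S A := by
  refine ⟨fun a => ?_⟩
  have ha : a ∈ Algebra.adjoin R s := hs ▸ Algebra.mem_top
  exact Algebra.adjoin_le (S := (integralClosure S A).restrictScalars R) h ha

theorem algebraicIndependent_mul_add_pow (K : Type*) [CommRing K] [IsDomain K] {n : ℕ}
    (hn : n ≠ 0) :
    AlgebraicIndependent K (![X 0 * X 1, X 0 ^ n + X 1 ^ n] : Fin 2 → MvPolynomial (Fin 2) K) := by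
  set x : Fin 2 → MvPolynomial (Fin 2) K := ![X 0 * X 1, X 0 ^ n + X 1 ^ n]
  let S := Algebra.adjoin K (Set.range x)
  have hsum : X 0 ^ n + X 1 ^ n ∈ (algebraMap S (MvPolynomial (Fin 2) K)).range :=
    ⟨⟨x 1, Algebra.subset_adjoin (Set.mem_range_self 1)⟩, rfl⟩
  have hprod : X 0 ^ n * X 1 ^ n ∈ (algebraMap S (MvPolynomial (Fin 2) K)).range :=
    ⟨⟨x 0 ^ n, pow_mem (Algebra.subset_adjoin (Set.mem_range_self 0)) n⟩, by simp [x, mul_pow]⟩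
  have hX : ∀ i, IsIntegral S (X i : MvPolynomial (Fin 2) K) := by
    intro i
    refine IsIntegral.of_pow (Nat.pos_of_ne_zero hn) ?_
    fin_cases i
    · exact .of_add_mem_range_of_mul_mem_range hsum hprod
    · exact .of_add_mem_range_of_mul_mem_range (b := X 0 ^ n) (by rwa [add_comm])
        (by rwa [mul_comm])
  have : Algebra.IsIntegral S (MvPolynomial (Fin 2) K) :=
    Algebra.isIntegral_of_adjoin_eq_top adjoin_range_X (by rintro _ ⟨i, rfl⟩; exact hX i)
  have : Algebra.IsAlgebraic S (MvPolynomial (Fin 2) K) := Algebra.IsIntegral.isAlgebraic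
  exact (Algebra.IsAlgebraic.isTranscendenceBasis_of_lift_le_trdeg_of_finite K x (by simp)).1

theorem MvPolynomial.algHom_apply_eq_diagonal_aeval {σ n R S : Type*} [CommSemiring R]
    [CommSemiring S] [Algebra R S] [Fintype n] [DecidableEq n]
    (Φ : MvPolynomial σ R →ₐ[R] Matrix n n S) (g : n → σ → S)
    (hΦ : ∀ i, Φ (X i) = diagonal fun k => g k i) (p : MvPolynomial σ R) :
    Φ p = diagonal fun k => aeval (g k) p := by
  have : Φ = (diagonalAlgHom R).comp (AlgHom.pi fun k => aeval (g k)) :=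
    algHom_ext fun i => by simp [hΦ]
  rw [this]
  rfl

local notation "M₂" => Matrix (Fin 2) (Fin 2) (MvPolynomial (Fin 2) ℂ)

namespace Stmt19

variable {c : ℂ}

theorem u_mul_u : u c * u c = c • (v c * v c) := by
  rw [u, v, ← map_mul, ← map_mul, ← map_smul]
  exact RingQuot.mkAlgHom_rel ℂ Rel.main

theorem adjoin_u_v : Algebra.adjoin ℂ {u c, v c} = ⊤ := by
  have : RingQuot.mkAlgHom ℂ (Rel c) '' Set.range (ι ℂ) = {u c, v c} := by
    ext
    simp [Fin.exists_fin_two, u, v, eq_comm]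
  rw [← this, ← AlgHom.map_adjoin, adjoin_range_ι, Algebra.map_top, AlgHom.range_eq_top]
  exact RingQuot.mkAlgHom_surjective ℂ (Rel c)

theorem commute_u_sq (a : A c) : Commute (u c ^ 2) a := by
  refine Algebra.commute_of_mem_adjoin_of_forall_mem_commute (adjoin_u_v ▸ Algebra.mem_top) ?_
  rintro b (rfl | rfl)
  · exact (Commute.refl _).pow_left 2
  · rw [sq, u_mul_u]
    exact ((Commute.refl _).mul_left (Commute.refl _)).smul_left c

def repU : M₂ := !![0, X 0; X 1, 0]

def repV (c : ℂ) : M₂ := !![0, C c⁻¹ * X 1; X 0, 0]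

theorem repU_mul_repU : repU * repU = diagonal ![X 0 * X 1, X 0 * X 1] := by
  refine Matrix.ext fun i j => ?_
  fin_cases i <;> fin_cases j <;> simp [repU, Matrix.mul_apply, mul_comm]

theorem repU_mul_repU_eq_smul (hc : c ≠ 0) : repU * repU = c • (repV c * repV c) := by
  have hC : C c * C c⁻¹ = (1 : MvPolynomial (Fin 2) ℂ) := by
    rw [← C_mul, mul_inv_cancel₀ hc, C_1]
  refine Matrix.ext fun i j => ?_
  fin_cases i <;> fin_cases j <;> simp [repU, repV, Matrix.mul_apply, smul_eq_C_mul]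
  all_goals linear_combination (X 0 * X 1) * hC.symm

theorem repU_mul_repV : repU * repV c = diagonal ![X 0 ^ 2, C c⁻¹ * X 1 ^ 2] := by
  refine Matrix.ext fun i j => ?_
  fin_cases i <;> fin_cases j <;> simp [repU, repV, Matrix.mul_apply] <;> ring

theorem repV_mul_repU : repV c * repU = diagonal ![C c⁻¹ * X 1 ^ 2, X 0 ^ 2] := by
  refine Matrix.ext fun i j => ?_
  fin_cases i <;> fin_cases j <;> simp [repU, repV, Matrix.mul_apply] <;> ring

def rep (hc : c ≠ 0) : A c →ₐ[ℂ] M₂ :=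
  RingQuot.liftAlgHom ℂ ⟨FreeAlgebra.lift ℂ ![repU, repV c], by
    rintro _ _ ⟨⟩
    simpa using repU_mul_repU_eq_smul hc⟩

theorem rep_u (hc : c ≠ 0) : rep hc (u c) = repU := by
  simp [rep, u]

theorem rep_v (hc : c ≠ 0) : rep hc (v c) = repV c := by
  simp [rep, v]

theorem rep_u_sq (hc : c ≠ 0) : rep hc (u c ^ 2) = diagonal ![X 0 * X 1, X 0 * X 1] := by
  rw [map_pow, rep_u, sq, repU_mul_repU]

theorem rep_uv_pow_sub_vu_pow {m : ℕ} (hc : c ≠ 0) (hcm : c ^ m = -1) :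
    rep hc ((u c * v c) ^ m - (v c * u c) ^ m) =
      diagonal ![X 0 ^ (2 * m) + X 1 ^ (2 * m), -(X 0 ^ (2 * m) + X 1 ^ (2 * m))] := by
  have hpow : (C c⁻¹ * X 1 ^ 2 : MvPolynomial (Fin 2) ℂ) ^ m = -X 1 ^ (2 * m) := by
    rw [mul_pow, ← map_pow, inv_pow, hcm, ← pow_mul]
    simp
  rw [map_sub, map_pow, map_pow, map_mul, map_mul, rep_u, rep_v, repU_mul_repV, repV_mul_repU,
    diagonal_pow, diagonal_pow, diagonal_sub]
  congr 1
  ext k : 1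
  fin_cases k <;> simp [hpow, ← pow_mul]
  ring

end Stmt19

open Stmt19 MvPolynomial in
theorem stmt_19_general (m : ℕ) (c : ℂ) (hc : c ^ m = -1) :
    (∀ a : A c, u c ^ 2 * a = a * u c ^ 2) ∧
    (u c ^ 2 * ((u c * v c) ^ m - (v c * u c) ^ m) =
      ((u c * v c) ^ m - (v c * u c) ^ m) * u c ^ 2) ∧
    (∀ φ : MvPolynomial (Fin 2) ℂ →ₐ[ℂ] A c,
      φ (X 0) = u c ^ 2 → φ (X 1) = (u c * v c) ^ m - (v c * u c) ^ m →
        Function.Injective φ) := by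
  have hm : m ≠ 0 := by
    rintro rfl
    norm_num at hc
  have hc0 : c ≠ 0 := by
    rintro rfl
    norm_num [zero_pow hm] at hc
  refine ⟨fun a => (commute_u_sq a).eq, (commute_u_sq _).eq, fun φ hφu hφw P Q hPQ => ?_⟩
  set f : MvPolynomial (Fin 2) ℂ := X 0 ^ (2 * m) + X 1 ^ (2 * m)
  have hdiag := algHom_apply_eq_diagonal_aeval ((rep hc0).comp φ)
    ![![X 0 * X 1, f], ![X 0 * X 1, -f]] (by
      simp [Fin.forall_fin_two, hφu, hφw, rep_u_sq, rep_uv_pow_sub_vu_pow hc0 hc, f])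
  have hPQ' : (rep hc0).comp φ P = (rep hc0).comp φ Q := congrArg (rep hc0) hPQ
  rw [hdiag, hdiag] at hPQ'
  exact algebraicIndependent_mul_add_pow ℂ (by omega) (congrFun (diagonal_injective hPQ') 0)

open Stmt19 MvPolynomial in
/-- `u²` is central, it commutes with `(uv)^m - (vu)^m`, and the two elements are
algebraically independent over `ℂ`: any ℂ-algebra homomorphism from the polynomial
ring `ℂ[X,Y]` into `A` sending `X` to `u²` and `Y` to `(uv)^m - (vu)^m` is injective. -/
theorem stmt_19 (m : ℕ) (hm : 1 ≤ m) (c : ℂ) (hc : c ^ m = -1) :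
    (∀ a : A c, u c ^ 2 * a = a * u c ^ 2) ∧
    (u c ^ 2 * ((u c * v c) ^ m - (v c * u c) ^ m) =
      ((u c * v c) ^ m - (v c * u c) ^ m) * u c ^ 2) ∧
    (∀ φ : MvPolynomial (Fin 2) ℂ →ₐ[ℂ] A c,
      φ (X 0) = u c ^ 2 → φ (X 1) = (u c * v c) ^ m - (v c * u c) ^ m →
        Function.Injective φ) :=
  stmt_19_general m c hc

end
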